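/- arXiv:1802.06232 — 2 statements merged into one kernel-verified Lean document; each statement's English description precedes it below -/
import Mathlib

section
/- For any U, U* ∈ ℝ^{p×r}, letting X = UUᵀ and X* = U*(U*)ᵀ, one has ‖X − X*‖_F² ≤ 2(‖X‖_F + ‖X*‖_F)·‖U − U*‖_F². -/
open Matrix BigOperators

/-- Frobenius norm of a real matrix. -/
noncomputable def frob {m n : ℕ} (A : Matrix (Fin m) (Fin n) ℝ) : ℝ :=
  Real.sqrt (∑ i, ∑ j, A i j ^ 2)

namespace FrobAux

noncomputable def dot {m n : ℕ} (A B : Matrix (Fin m) (Fin n) ℝ) : ℝ :=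
  ∑ i, ∑ j, A i j * B i j

lemma frob_nonneg {m n : ℕ} (A : Matrix (Fin m) (Fin n) ℝ) : 0 ≤ frob A :=
  Real.sqrt_nonneg _

lemma frob_sq {m n : ℕ} (A : Matrix (Fin m) (Fin n) ℝ) :
    frob A ^ 2 = ∑ i, ∑ j, A i j ^ 2 :=
  Real.sq_sqrt (by positivity)

lemma frob_sq_eq_dot {m n : ℕ} (A : Matrix (Fin m) (Fin n) ℝ) :
    frob A ^ 2 = dot A A := by
  rw [frob_sq]; unfold dot; simp [sq]

/-- Cauchy–Schwarz for the Frobenius inner product. -/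
lemma dot_le {m n : ℕ} (A B : Matrix (Fin m) (Fin n) ℝ) :
    dot A B ≤ frob A * frob B := by
  unfold dot frob
  have := Real.sum_mul_le_sqrt_mul_sqrt (Finset.univ : Finset (Fin m × Fin n))
    (fun p => A p.1 p.2) (fun p => B p.1 p.2)
  simpa [Fintype.sum_prod_type] using this

lemma dot_eq_trace {m n : ℕ} (A B : Matrix (Fin m) (Fin n) ℝ) :
    dot A B = (Aᵀ * B).trace := by
  unfold dot
  rw [Matrix.trace]
  simp only [Matrix.diag_apply, Matrix.mul_apply, Matrix.transpose_apply]
  exact Finset.sum_comm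

lemma dot_comm {m n : ℕ} (A B : Matrix (Fin m) (Fin n) ℝ) :
    dot A B = dot B A := by
  unfold dot; simp [mul_comm]

/-- key trace identity: `‖ABᵀ‖² = ⟪AᵀA, BᵀB⟫`. -/
lemma frob_mul_transpose_sq {m n k : ℕ} (A : Matrix (Fin m) (Fin k) ℝ)
    (B : Matrix (Fin n) (Fin k) ℝ) :
    frob (A * Bᵀ) ^ 2 = dot (Aᵀ * A) (Bᵀ * B) := by
  rw [frob_sq_eq_dot, dot_eq_trace, dot_eq_trace]
  rw [Matrix.transpose_mul, Matrix.transpose_transpose, Matrix.transpose_mul,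
    Matrix.transpose_transpose]
  calc (B * Aᵀ * (A * Bᵀ)).trace = (B * (Aᵀ * A * Bᵀ)).trace := by
        rw [Matrix.mul_assoc, Matrix.mul_assoc]
    _ = (Aᵀ * A * Bᵀ * B).trace := by rw [Matrix.trace_mul_comm]
    _ = (Aᵀ * A * (Bᵀ * B)).trace := by rw [Matrix.mul_assoc]

/-- `‖AᵀA‖_F = ‖AAᵀ‖_F`. -/
lemma frob_transpose_mul {m n : ℕ} (A : Matrix (Fin m) (Fin n) ℝ) :
    frob (Aᵀ * A) = frob (A * Aᵀ) := by
  have h : frob (Aᵀ * A) ^ 2 = frob (A * Aᵀ) ^ 2 := by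
    have h1 := frob_mul_transpose_sq Aᵀ Aᵀ
    rw [Matrix.transpose_transpose] at h1
    have h2 := frob_mul_transpose_sq A A
    rw [h1, ← frob_sq_eq_dot]
  calc frob (Aᵀ * A) = Real.sqrt (frob (Aᵀ * A) ^ 2) := (Real.sqrt_sq (frob_nonneg _)).symm
    _ = Real.sqrt (frob (A * Aᵀ) ^ 2) := by rw [h]
    _ = frob (A * Aᵀ) := Real.sqrt_sq (frob_nonneg _)

/-- `‖AᵀA‖_F ≤ ‖A‖_F²`. -/
lemma frob_transpose_mul_le {m n : ℕ} (A : Matrix (Fin m) (Fin n) ℝ) :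
    frob (Aᵀ * A) ≤ frob A ^ 2 := by
  have key : frob (Aᵀ * A) ^ 2 ≤ (frob A ^ 2) ^ 2 := by
    rw [frob_sq]
    have hentry : ∀ j k : Fin n, (Aᵀ * A) j k ^ 2 ≤ (∑ i, A i j ^ 2) * (∑ i, A i k ^ 2) := by
      intro j k
      have := Finset.sum_mul_sq_le_sq_mul_sq Finset.univ (fun i => A i j) (fun i => A i k)
      simpa [Matrix.mul_apply, Matrix.transpose_apply] using this
    calc ∑ j, ∑ k, (Aᵀ * A) j k ^ 2
        ≤ ∑ j, ∑ k, (∑ i, A i j ^ 2) * (∑ i, A i k ^ 2) := by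
          apply Finset.sum_le_sum; intro j _
          apply Finset.sum_le_sum; intro k _
          exact hentry j k
      _ = (∑ j, ∑ i, A i j ^ 2) * (∑ k, ∑ i, A i k ^ 2) :=
          (Finset.sum_mul_sum Finset.univ Finset.univ
            (fun j => ∑ i, A i j ^ 2) (fun k => ∑ i, A i k ^ 2)).symm
      _ = (frob A ^ 2) ^ 2 := by
          have hc : (∑ j : Fin n, ∑ i : Fin m, A i j ^ 2)
              = ∑ i, ∑ j, A i j ^ 2 := Finset.sum_comm
          rw [frob_sq, hc]; ring
  nlinarith [frob_nonneg (Aᵀ * A), sq_nonneg (frob A)]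

/-- triangle inequality for `frob`. -/
lemma frob_add_le {m n : ℕ} (A B : Matrix (Fin m) (Fin n) ℝ) :
    frob (A + B) ≤ frob A + frob B := by
  have h : frob (A + B) ^ 2 ≤ (frob A + frob B) ^ 2 := by
    have hAB : dot A B ≤ frob A * frob B := dot_le A B
    have h1 : frob (A + B) ^ 2 = frob A ^ 2 + 2 * dot A B + frob B ^ 2 := by
      rw [frob_sq_eq_dot, frob_sq_eq_dot, frob_sq_eq_dot]
      unfold dot
      simp only [Matrix.add_apply, ← Finset.sum_add_distrib, Finset.mul_sum]
      congr 1; ext i; congr 1; ext j; ring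
    nlinarith
  nlinarith [frob_nonneg (A + B), frob_nonneg A, frob_nonneg B]

end FrobAux

/-- for `X = UUᵀ`, `X* = U*(U*)ᵀ`,
`‖X − X*‖_F² ≤ 2(‖X‖_F + ‖X*‖_F)·‖U − U*‖_F²`. -/
theorem frob_sq_diff_outer_le {p r : ℕ} (U Us : Matrix (Fin p) (Fin r) ℝ) :
    frob (U * Uᵀ - Us * Usᵀ) ^ 2 ≤
      2 * (frob (U * Uᵀ) + frob (Us * Usᵀ)) * frob (U - Us) ^ 2 := by
  open FrobAux in
  set D := U - Us with hD
  have hsplit : U * Uᵀ - Us * Usᵀ = U * Dᵀ + D * Usᵀ := by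
    rw [hD]
    simp only [Matrix.transpose_sub, Matrix.mul_sub, Matrix.sub_mul]
    abel
  -- bounds on the two pieces
  have h1 : frob (U * Dᵀ) ^ 2 ≤ frob (U * Uᵀ) * frob D ^ 2 := by
    calc frob (U * Dᵀ) ^ 2 = FrobAux.dot (Uᵀ * U) (Dᵀ * D) :=
          FrobAux.frob_mul_transpose_sq U D
      _ ≤ frob (Uᵀ * U) * frob (Dᵀ * D) := FrobAux.dot_le _ _
      _ ≤ frob (U * Uᵀ) * frob D ^ 2 := by
          rw [FrobAux.frob_transpose_mul]
          exact mul_le_mul_of_nonneg_left (FrobAux.frob_transpose_mul_le D)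
            (FrobAux.frob_nonneg _)
  have h2 : frob (D * Usᵀ) ^ 2 ≤ frob (Us * Usᵀ) * frob D ^ 2 := by
    calc frob (D * Usᵀ) ^ 2 = FrobAux.dot (Dᵀ * D) (Usᵀ * Us) :=
          FrobAux.frob_mul_transpose_sq D Us
      _ = FrobAux.dot (Usᵀ * Us) (Dᵀ * D) := FrobAux.dot_comm _ _
      _ ≤ frob (Usᵀ * Us) * frob (Dᵀ * D) := FrobAux.dot_le _ _
      _ ≤ frob (Us * Usᵀ) * frob D ^ 2 := by
          rw [FrobAux.frob_transpose_mul]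
          exact mul_le_mul_of_nonneg_left (FrobAux.frob_transpose_mul_le D)
            (FrobAux.frob_nonneg _)
  have htri : frob (U * Uᵀ - Us * Usᵀ) ≤ frob (U * Dᵀ) + frob (D * Usᵀ) := by
    rw [hsplit]; exact FrobAux.frob_add_le _ _
  have ha := FrobAux.frob_nonneg (U * Uᵀ)
  have hb := FrobAux.frob_nonneg (Us * Usᵀ)
  have hc := FrobAux.frob_nonneg (U * Dᵀ)
  have hd := FrobAux.frob_nonneg (D * Usᵀ)
  have he := FrobAux.frob_nonneg (U * Uᵀ - Us * Usᵀ)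
  nlinarith [sq_nonneg (frob (U * Dᵀ) - frob (D * Usᵀ)), sq_nonneg (frob D),
    mul_nonneg hc hd]
end

section
/- Let G be a map from p×p real matrices to symmetric p×p real matrices that is L-Lipschitz in Frobenius norm on positive semidefinite matrices. Let U, U_r^* ∈ ℝ^{p×r}, let σ > 0 satisfy ‖U_r^* x‖₂ ≥ σ‖x‖₂ for all x ∈ ℝ^r, let X = UUᵀ and X_r^* = U_r^*(U_r^*)ᵀ, let τ(U_r^*) := ‖U_r^*‖₂/σ, and let γ₀ ∈ (0,1) with ‖U − U_r^*‖_F² < γ₀σ². Define η̄ := min{(1 − √γ₀)² / (‖G(X_r^*)‖_F/(Lσ²) + (2√γ₀ + γ₀)τ(U_r^*)), 1}, and let P_U be the orthogonal projection onto the column space of U. Then the matrix X̄ := X − (η̄/L)·P_U·G(X)·P_U is symmetric positive semidefinite. -/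
/-!
For `y = P_U v` the quadratic form of `X̄` at `v` is `‖Uᵀy‖² − (η̄/L)·yᵀG(X)y`. Since
`U` is close to `U_r^*` in Frobenius norm, it inherits the lower bound `(1 − √γ₀)σ`, and as `y = Uw`
lies in the column space of `U` this gives `‖Uᵀy‖ ≥ (1 − √γ₀)σ‖y‖`. On the other side,
`yᵀG(X)y ≤ ‖G(X)‖_F‖y‖²`, and the Lipschitz bound together with
`‖X − X_r^*‖_F ≤ ‖U − U_r^*‖_F (‖U‖₂ + ‖U_r^*‖₂)` bounds `‖G(X)‖_F` by `Lσ²` times the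
denominator of `η̄`; `η̄` is chosen exactly so that the two estimates balance.
-/

open Matrix BigOperators

/-- Euclidean norm of a real vector. -/
noncomputable def vnorm {n : ℕ} (x : Fin n → ℝ) : ℝ :=
  Real.sqrt (∑ i, x i ^ 2)

/-- Spectral (operator `ℓ₂`) norm of a real matrix. -/
noncomputable def specNorm {m n : ℕ} (A : Matrix (Fin m) (Fin n) ℝ) : ℝ :=
  sInf {c : ℝ | 0 ≤ c ∧ ∀ x, vnorm (A *ᵥ x) ≤ c * vnorm x}

/-- `P` is the orthogonal projection onto the column space of `U`: the symmetric,
idempotent matrix fixing `U` whose range is contained in (hence equal to) the column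
space of `U`. -/
def IsColProj {p r : ℕ} (U : Matrix (Fin p) (Fin r) ℝ)
    (P : Matrix (Fin p) (Fin p) ℝ) : Prop :=
  Pᵀ = P ∧ P * P = P ∧ P * U = U ∧
    ∀ y : Fin p → ℝ, (∃ w, P *ᵥ w = y) → ∃ c : Fin r → ℝ, U *ᵥ c = y

open WithLp (toLp)

section Norms

variable {m n k : ℕ}

theorem vnorm_eq_norm (x : Fin n → ℝ) : vnorm x = ‖toLp 2 x‖ := by
  simp [vnorm, EuclideanSpace.norm_eq]

theorem vnorm_nonneg (x : Fin n → ℝ) : 0 ≤ vnorm x := Real.sqrt_nonneg _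

theorem vnorm_pos {x : Fin n → ℝ} : 0 < vnorm x ↔ x ≠ 0 := by
  simp [vnorm_eq_norm]

theorem vnorm_add_le (x y : Fin n → ℝ) : vnorm (x + y) ≤ vnorm x + vnorm y := by
  simpa only [vnorm_eq_norm, WithLp.toLp_add] using norm_add_le _ _

theorem dotProduct_le_vnorm_mul_vnorm (x y : Fin n → ℝ) : x ⬝ᵥ y ≤ vnorm x * vnorm y := by
  simpa [vnorm_eq_norm, EuclideanSpace.inner_toLp_toLp, dotProduct_comm] using
    real_inner_le_norm (toLp 2 x) (toLp 2 y)

theorem dotProduct_self_eq_vnorm_sq (x : Fin n → ℝ) : x ⬝ᵥ x = vnorm x ^ 2 := by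
  rw [vnorm, Real.sq_sqrt (by positivity)]
  simp [dotProduct, sq]

theorem specNorm_eq_opNorm (A : Matrix (Fin m) (Fin n) ℝ) :
    specNorm A = ‖LinearMap.toContinuousLinearMap (toLpLin 2 2 A)‖ := by
  rw [ContinuousLinearMap.norm_def, specNorm]
  congr! 4 with c
  simp only [vnorm_eq_norm, LinearMap.coe_toContinuousLinearMap', toLpLin_apply]
  exact ⟨fun h x => h x.ofLp, fun h x => h (toLp 2 x)⟩

theorem specNorm_nonneg (A : Matrix (Fin m) (Fin n) ℝ) : 0 ≤ specNorm A := by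
  rw [specNorm_eq_opNorm]
  exact norm_nonneg _

theorem vnorm_mulVec_le (A : Matrix (Fin m) (Fin n) ℝ) (x : Fin n → ℝ) :
    vnorm (A *ᵥ x) ≤ specNorm A * vnorm x := by
  simpa [specNorm_eq_opNorm, vnorm_eq_norm, toLpLin_apply] using
    (LinearMap.toContinuousLinearMap (toLpLin 2 2 A)).le_opNorm (toLp 2 x)

theorem specNorm_le_of_forall {A : Matrix (Fin m) (Fin n) ℝ} {c : ℝ} (hc : 0 ≤ c)
    (h : ∀ x, vnorm (A *ᵥ x) ≤ c * vnorm x) : specNorm A ≤ c :=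
  csInf_le ⟨0, fun _ hc => hc.1⟩ ⟨hc, h⟩

theorem specNorm_add_le (A B : Matrix (Fin m) (Fin n) ℝ) :
    specNorm (A + B) ≤ specNorm A + specNorm B := by
  simpa only [specNorm_eq_opNorm, map_add] using norm_add_le _ _

theorem le_specNorm_of_forall_le {A : Matrix (Fin m) (Fin n) ℝ} {σ : ℝ}
    (h : ∀ x, σ * vnorm x ≤ vnorm (A *ᵥ x)) {x : Fin n → ℝ} (hx : x ≠ 0) : σ ≤ specNorm A :=
  le_of_mul_le_mul_right ((h x).trans (vnorm_mulVec_le A x)) (vnorm_pos.2 hx)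

attribute [local instance] Matrix.frobeniusNormedAddCommGroup

theorem frob_eq_norm (A : Matrix (Fin m) (Fin n) ℝ) : frob A = ‖A‖ := by
  simp [frob, Matrix.frobenius_norm_def, Real.sqrt_eq_rpow]

theorem frob_nonneg (A : Matrix (Fin m) (Fin n) ℝ) : 0 ≤ frob A := Real.sqrt_nonneg _

theorem frob_add_le (A B : Matrix (Fin m) (Fin n) ℝ) : frob (A + B) ≤ frob A + frob B := by
  simpa only [frob_eq_norm] using norm_add_le A B

theorem frob_transpose (A : Matrix (Fin m) (Fin n) ℝ) : frob Aᵀ = frob A := by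
  simpa only [frob_eq_norm] using Matrix.frobenius_norm_transpose A

theorem frob_sub_comm (A B : Matrix (Fin m) (Fin n) ℝ) : frob (A - B) = frob (B - A) := by
  simpa only [frob_eq_norm] using norm_sub_rev A B

theorem frob_sq_eq_sum_vnorm_sq (A : Matrix (Fin m) (Fin n) ℝ) :
    frob A ^ 2 = ∑ i, vnorm (A i) ^ 2 := by
  simp only [frob, vnorm]
  rw [Real.sq_sqrt (by positivity)]
  exact Finset.sum_congr rfl fun i _ => (Real.sq_sqrt (by positivity)).symm

theorem vnorm_mulVec_le_frob (A : Matrix (Fin m) (Fin n) ℝ) (x : Fin n → ℝ) :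
    vnorm (A *ᵥ x) ≤ frob A * vnorm x := by
  have := Matrix.frobenius_norm_mul A (Matrix.replicateCol Unit x)
  rwa [← Matrix.replicateCol_mulVec, Matrix.frobenius_norm_replicateCol,
    Matrix.frobenius_norm_replicateCol, ← frob_eq_norm, ← vnorm_eq_norm, ← vnorm_eq_norm] at this

theorem specNorm_le_frob (A : Matrix (Fin m) (Fin n) ℝ) : specNorm A ≤ frob A :=
  specNorm_le_of_forall (frob_nonneg A) (vnorm_mulVec_le_frob A)

theorem frob_mul_le (A : Matrix (Fin m) (Fin n) ℝ) (B : Matrix (Fin n) (Fin k) ℝ) :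
    frob (A * B) ≤ specNorm A * frob B := by
  rw [← frob_transpose, ← frob_transpose B, Matrix.transpose_mul]
  refine (pow_le_pow_iff_left₀ (frob_nonneg _)
    (mul_nonneg (specNorm_nonneg A) (frob_nonneg _)) two_ne_zero).1 ?_
  rw [mul_pow, frob_sq_eq_sum_vnorm_sq, frob_sq_eq_sum_vnorm_sq, Finset.mul_sum]
  refine Finset.sum_le_sum fun j _ => ?_
  have hrow : (Bᵀ * Aᵀ) j = A *ᵥ Bᵀ j := by
    ext i; simp [Matrix.mul_apply, Matrix.mulVec, dotProduct, mul_comm]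
  rw [← mul_pow, hrow]
  exact pow_le_pow_left₀ (vnorm_nonneg _) (vnorm_mulVec_le A _) 2

end Norms

section Quadratic

variable {m n : ℕ}

theorem dotProduct_mulVec_le_frob (M : Matrix (Fin m) (Fin m) ℝ) (x : Fin m → ℝ) :
    x ⬝ᵥ M *ᵥ x ≤ frob M * vnorm x ^ 2 :=
  calc x ⬝ᵥ M *ᵥ x ≤ vnorm x * vnorm (M *ᵥ x) := dotProduct_le_vnorm_mul_vnorm _ _
    _ ≤ vnorm x * (frob M * vnorm x) :=
      mul_le_mul_of_nonneg_left (vnorm_mulVec_le_frob M x) (vnorm_nonneg x)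
    _ = frob M * vnorm x ^ 2 := by ring

theorem sub_frob_mul_vnorm_le {A B : Matrix (Fin m) (Fin n) ℝ} {σ : ℝ}
    (hA : ∀ x, σ * vnorm x ≤ vnorm (A *ᵥ x)) (x : Fin n → ℝ) :
    (σ - frob (A - B)) * vnorm x ≤ vnorm (B *ᵥ x) := by
  have htri := vnorm_add_le (B *ᵥ x) ((A - B) *ᵥ x)
  rw [← Matrix.add_mulVec, add_sub_cancel] at htri
  rw [sub_mul]
  linarith [hA x, vnorm_mulVec_le_frob (A - B) x]

theorem mul_vnorm_le_vnorm_transpose_mulVec {U : Matrix (Fin m) (Fin n) ℝ} {s : ℝ}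
    (hU : ∀ w, s * vnorm w ≤ vnorm (U *ᵥ w)) (w : Fin n → ℝ) :
    s * vnorm (U *ᵥ w) ≤ vnorm (Uᵀ *ᵥ (U *ᵥ w)) := by
  rcases eq_or_ne w 0 with rfl | hw
  · simp [vnorm]
  refine le_of_mul_le_mul_right ?_ (vnorm_pos.2 hw)
  calc s * vnorm (U *ᵥ w) * vnorm w = vnorm (U *ᵥ w) * (s * vnorm w) := by ring
    _ ≤ vnorm (U *ᵥ w) * vnorm (U *ᵥ w) := mul_le_mul_of_nonneg_left (hU w) (vnorm_nonneg _)
    _ = Uᵀ *ᵥ (U *ᵥ w) ⬝ᵥ w := by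
      rw [← sq, ← dotProduct_self_eq_vnorm_sq, Matrix.mulVec_transpose, ← Matrix.dotProduct_mulVec]
    _ ≤ vnorm (Uᵀ *ᵥ (U *ᵥ w)) * vnorm w := dotProduct_le_vnorm_mul_vnorm _ _

theorem mul_dotProduct_mulVec_le {U : Matrix (Fin m) (Fin n) ℝ} {M : Matrix (Fin m) (Fin m) ℝ}
    {s c : ℝ} (hs : 0 ≤ s) (hc : 0 ≤ c) (hU : ∀ w, s * vnorm w ≤ vnorm (U *ᵥ w))
    (hcM : c * frob M ≤ s ^ 2) (w : Fin n → ℝ) :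
    c * (U *ᵥ w ⬝ᵥ M *ᵥ (U *ᵥ w)) ≤ vnorm (Uᵀ *ᵥ (U *ᵥ w)) ^ 2 := by
  set y := U *ᵥ w
  calc c * (y ⬝ᵥ M *ᵥ y) ≤ c * (frob M * vnorm y ^ 2) :=
        mul_le_mul_of_nonneg_left (dotProduct_mulVec_le_frob M y) hc
    _ ≤ s ^ 2 * vnorm y ^ 2 := by
        rw [← mul_assoc]; exact mul_le_mul_of_nonneg_right hcM (sq_nonneg _)
    _ = (s * vnorm y) ^ 2 := by ring
    _ ≤ vnorm (Uᵀ *ᵥ y) ^ 2 :=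
        pow_le_pow_left₀ (mul_nonneg hs (vnorm_nonneg y))
          (mul_vnorm_le_vnorm_transpose_mulVec hU w) 2

theorem posSemidef_mul_transpose_sub_smul {U : Matrix (Fin m) (Fin n) ℝ}
    {P M : Matrix (Fin m) (Fin m) ℝ} {c : ℝ} (hM : Mᵀ = M) (hP : Pᵀ = P) (hPU : P * U = U)
    (h : ∀ v, c * (P *ᵥ v ⬝ᵥ M *ᵥ (P *ᵥ v)) ≤ vnorm (Uᵀ *ᵥ (P *ᵥ v)) ^ 2) :
    (U * Uᵀ - c • (P * M * P)).PosSemidef := by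
  have hUP : Uᵀ * P = Uᵀ := by rw [← hP, ← Matrix.transpose_mul, hPU]
  rw [Matrix.posSemidef_iff_dotProduct_mulVec]
  refine ⟨?_, fun v => ?_⟩
  · simp [Matrix.IsHermitian, Matrix.transpose_mul, hM, hP, Matrix.mul_assoc]
  · have hquad : v ⬝ᵥ (U * Uᵀ - c • (P * M * P)) *ᵥ v
        = vnorm (Uᵀ *ᵥ (P *ᵥ v)) ^ 2 - c * (P *ᵥ v ⬝ᵥ M *ᵥ (P *ᵥ v)) := by
      have hX : v ⬝ᵥ (U * Uᵀ) *ᵥ v = vnorm (Uᵀ *ᵥ (P *ᵥ v)) ^ 2 := by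
        rw [Matrix.mulVec_mulVec, hUP, ← dotProduct_self_eq_vnorm_sq, ← Matrix.mulVec_mulVec,
          Matrix.dotProduct_mulVec, ← Matrix.mulVec_transpose]
      have hQ : v ⬝ᵥ (P * M * P) *ᵥ v = P *ᵥ v ⬝ᵥ M *ᵥ (P *ᵥ v) := by
        rw [← Matrix.mulVec_mulVec, ← Matrix.mulVec_mulVec, Matrix.dotProduct_mulVec,
          ← Matrix.mulVec_transpose, hP]
      rw [Matrix.sub_mulVec, dotProduct_sub, Matrix.smul_mulVec, dotProduct_smul, hX, hQ,
        smul_eq_mul]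
    simpa [hquad] using h v

end Quadratic

section Perturbation

variable {p r : ℕ}

theorem frob_mul_transpose_sub_le (U V : Matrix (Fin p) (Fin r) ℝ) :
    frob (U * Uᵀ - V * Vᵀ) ≤ frob (U - V) * (specNorm U + specNorm V) := by
  have hsplit : U * Uᵀ - V * Vᵀ = U * (U - V)ᵀ + (V * (U - V)ᵀ)ᵀ := by
    simp only [Matrix.transpose_mul, Matrix.transpose_transpose, Matrix.transpose_sub,
      Matrix.mul_sub]
    abel
  have hfac (A : Matrix (Fin p) (Fin r) ℝ) : frob (A * (U - V)ᵀ) ≤ specNorm A * frob (U - V) :=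
    (frob_mul_le _ _).trans_eq (by rw [frob_transpose])
  calc frob (U * Uᵀ - V * Vᵀ) ≤ frob (U * (U - V)ᵀ) + frob (V * (U - V)ᵀ) := by
        rw [hsplit, ← frob_transpose (V * _)]; exact frob_add_le _ _
    _ ≤ specNorm U * frob (U - V) + specNorm V * frob (U - V) := add_le_add (hfac U) (hfac V)
    _ = frob (U - V) * (specNorm U + specNorm V) := by ring

theorem frob_mul_transpose_sub_le_of_frob_sub_le {U V : Matrix (Fin p) (Fin r) ℝ} {σ g : ℝ}
    (hσ : 0 ≤ σ) (hg : 0 ≤ g) (hUV : frob (U - V) ≤ g * σ) (hσV : σ ≤ specNorm V) :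
    frob (U * Uᵀ - V * Vᵀ) ≤ σ * ((2 * g + g ^ 2) * specNorm V) := by
  have hU : specNorm U ≤ specNorm V + g * σ := by
    have := specNorm_add_le V (U - V)
    rw [add_sub_cancel] at this
    linarith [specNorm_le_frob (U - V)]
  calc frob (U * Uᵀ - V * Vᵀ) ≤ frob (U - V) * (specNorm U + specNorm V) :=
        frob_mul_transpose_sub_le U V
    _ ≤ g * σ * (2 * specNorm V + g * σ) := mul_le_mul hUV (by linarith)
        (add_nonneg (specNorm_nonneg U) (specNorm_nonneg V)) (mul_nonneg hg hσ)
    _ ≤ g * σ * (2 * specNorm V + g * specNorm V) := by gcongr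
    _ = σ * ((2 * g + g ^ 2) * specNorm V) := by ring

theorem posSemidef_mul_transpose (U : Matrix (Fin p) (Fin r) ℝ) : (U * Uᵀ).PosSemidef := by
  simpa using Matrix.posSemidef_self_mul_conjTranspose U

theorem frob_apply_mul_transpose_le {G : Matrix (Fin p) (Fin p) ℝ → Matrix (Fin p) (Fin p) ℝ}
    {L σ g : ℝ} (hlip : ∀ X Y : Matrix (Fin p) (Fin p) ℝ, X.PosSemidef → Y.PosSemidef →
      frob (G X - G Y) ≤ L * frob (X - Y))
    (hL : 0 ≤ L) (hσ : 0 ≤ σ) (hg : 0 ≤ g) {U V : Matrix (Fin p) (Fin r) ℝ}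
    (hUV : frob (U - V) ≤ g * σ) (hσV : σ ≤ specNorm V) :
    frob (G (U * Uᵀ)) ≤ frob (G (V * Vᵀ)) + L * (σ * ((2 * g + g ^ 2) * specNorm V)) := by
  have htri := frob_add_le (G (V * Vᵀ)) (G (U * Uᵀ) - G (V * Vᵀ))
  rw [add_sub_cancel] at htri
  have hlipUV := hlip _ _ (posSemidef_mul_transpose U) (posSemidef_mul_transpose V)
  have hXY := mul_le_mul_of_nonneg_left
    (frob_mul_transpose_sub_le_of_frob_sub_le hσ hg hUV hσV) hL
  linarith

end Perturbation

theorem min_div_one_div_mul_le {a D L σ F : ℝ} (ha : 0 ≤ a) (hD : 0 ≤ D) (hL : 0 < L)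
    (hF : F ≤ L * σ ^ 2 * D) : min (a / D) 1 / L * F ≤ a * σ ^ 2 := by
  set η := min (a / D) 1
  have hη : 0 ≤ η := le_min (div_nonneg ha hD) zero_le_one
  have hηD : η * D ≤ a := by
    rcases hD.eq_or_lt with rfl | hD
    · simpa using ha
    · exact (le_div_iff₀ hD).1 (min_le_left _ _)
  calc η / L * F ≤ η / L * (L * σ ^ 2 * D) := mul_le_mul_of_nonneg_left hF (by positivity)
    _ = η * D * σ ^ 2 := by field_simp
    _ ≤ a * σ ^ 2 := mul_le_mul_of_nonneg_right hηD (sq_nonneg σ)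

/-- feasibility of `X̄`: under the hypotheses of the bounded-gradient
lemma, with `η̄ = min{(1 − √γ₀)²/(‖G(X_r^*)‖_F/(Lσ²) + (2√γ₀ + γ₀)τ(U_r^*)), 1}` and
`P_U` the orthogonal projection onto the column space of `U`, the matrix
`X̄ = X − (η̄/L)·P_U·G(X)·P_U` is symmetric positive semidefinite. -/
theorem feasibility_of_projected_step {p r : ℕ} (L σ γ₀ ebar : ℝ)
    (G : Matrix (Fin p) (Fin p) ℝ → Matrix (Fin p) (Fin p) ℝ)
    (hGsym : ∀ X, (G X)ᵀ = G X)
    (hlip : ∀ X Y : Matrix (Fin p) (Fin p) ℝ, X.PosSemidef → Y.PosSemidef →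
      frob (G X - G Y) ≤ L * frob (X - Y))
    (hL : 0 < L)
    (U Ur : Matrix (Fin p) (Fin r) ℝ) (P : Matrix (Fin p) (Fin p) ℝ)
    (hP : IsColProj U P)
    (hσ : 0 < σ) (hUr : ∀ x : Fin r → ℝ, σ * vnorm x ≤ vnorm (Ur *ᵥ x))
    (hγ₀0 : 0 < γ₀) (hγ₀1 : γ₀ < 1)
    (hclose : frob (U - Ur) ^ 2 < γ₀ * σ ^ 2)
    (hebar : ebar = min ((1 - Real.sqrt γ₀) ^ 2 /
      (frob (G (Ur * Urᵀ)) / (L * σ ^ 2) + (2 * Real.sqrt γ₀ + γ₀) * (specNorm Ur / σ))) 1) :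
    (U * Uᵀ - (ebar / L) • (P * G (U * Uᵀ) * P)).PosSemidef := by
  obtain ⟨hPsym, -, hPU, hPrange⟩ := hP
  set g := Real.sqrt γ₀
  have hg0 : 0 ≤ g := Real.sqrt_nonneg γ₀
  have hg1 : g ≤ 1 := Real.sqrt_le_one.2 hγ₀1.le
  have hgsq : g ^ 2 = γ₀ := Real.sq_sqrt hγ₀0.le
  have hδ : frob (U - Ur) ≤ g * σ :=
    (pow_le_pow_iff_left₀ (frob_nonneg _) (by positivity) two_ne_zero).1
      (by rw [mul_pow, hgsq]; exact hclose.le)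
  have hUlow (w : Fin r → ℝ) : (1 - g) * σ * vnorm w ≤ vnorm (U *ᵥ w) := by
    refine le_trans ?_ (sub_frob_mul_vnorm_le hUr w)
    rw [frob_sub_comm]
    exact mul_le_mul_of_nonneg_right (by linarith) (vnorm_nonneg w)
  set D := frob (G (Ur * Urᵀ)) / (L * σ ^ 2) + (2 * g + γ₀) * (specNorm Ur / σ)
  have hD : 0 ≤ D := add_nonneg (div_nonneg (frob_nonneg _) (by positivity))
    (mul_nonneg (by positivity) (div_nonneg (specNorm_nonneg _) hσ.le))
  refine posSemidef_mul_transpose_sub_smul (hGsym _) hPsym hPU fun v => ?_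
  obtain ⟨w, hw⟩ := hPrange (P *ᵥ v) ⟨v, rfl⟩
  rw [← hw]
  rcases eq_or_ne w 0 with rfl | hw0
  · simpa using sq_nonneg (vnorm 0)
  have hGX : frob (G (U * Uᵀ)) ≤ L * σ ^ 2 * D := by
    refine (frob_apply_mul_transpose_le hlip hL.le hσ.le hg0 hδ
      (le_specNorm_of_forall_le hUr hw0)).trans_eq ?_
    simp only [D, hgsq]
    field_simp
  refine mul_dotProduct_mulVec_le (mul_nonneg (by linarith) hσ.le) ?_ hUlow ?_ w
  · rw [hebar]; exact div_nonneg (le_min (by positivity) zero_le_one) hL.le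
  · rw [hebar, mul_pow]
    exact min_div_one_div_mul_le (sq_nonneg _) hD hL hGX
end
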